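/- Let Γ = N ⋊_σ Q where the action of Q on N∖{e} has only finite stabilizers (Stab_Q(n) is finite for every n ≠ e) and Q is infinite. Then, identifying Q with {(e,q)} ≤ Γ, one has QN^{(1)}_Γ(Q) = Q: whenever g ∈ Γ and Qg ⊆ FQ for some finite F ⊆ Γ, then g ∈ Q. -/

import Mathlib

/-!
Write `g = (n, q)`. Left-multiplying by `Q` moves the `N`-coordinate of `g` along the `Q`-orbit of
`n`, while right-multiplying by `Q` leaves the `N`-coordinate alone. So `Qg ⊆ FQ` confines the orbit
of `n` to the finitely many `N`-coordinates of `F`. If `n ≠ e`, its stabilizer is finite as well,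
and orbit–stabilizer makes `Q` finite.
-/

open scoped Pointwise

theorem MulAction.infinite_orbit_of_finite_stabilizer {G α : Type*} [Group G] [Infinite G]
    [MulAction G α] (a : α) (hs : (stabilizer G a : Set G).Finite) : (orbit G a).Infinite := by
  intro ho
  have : Finite (orbit G a) := ho.to_subtype
  have : Finite (stabilizer G a) := hs.to_subtype
  have : Finite G := (orbitProdStabilizerEquivGroup G a).finite_iff.mp inferInstance
  exact not_finite G

namespace SemidirectProduct

variable {N Q : Type*} [Group N] [Group Q] {σ : Q →* MulAut N}

theorem mem_range_inr_iff {g : N ⋊[σ] Q} : g ∈ Set.range inr ↔ g.left = 1 :=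
  ⟨fun ⟨_, hq⟩ => hq ▸ left_inr _, fun h => ⟨g.right, by ext <;> simp [h]⟩⟩

theorem left_inr_mul (q : Q) (g : N ⋊[σ] Q) : (inr q * g).left = σ q g.left := by
  simp

theorem left_mem_image_of_mem_mul_range_inr {s : Set (N ⋊[σ] Q)} {x : N ⋊[σ] Q}
    (hx : x ∈ s * Set.range inr) : x.left ∈ left '' s := by
  obtain ⟨a, ha, _, ⟨q, rfl⟩, rfl⟩ := hx
  exact ⟨a, ha, by simp⟩

theorem infinite_range_apply [Infinite Q] (σ : Q →* MulAut N) (n : N)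
    (hn : {r : Q | σ r n = n}.Finite) : (Set.range fun r => σ r n).Infinite := by
  let _ := MulAction.compHom N σ
  exact MulAction.infinite_orbit_of_finite_stabilizer n hn

end SemidirectProduct

/-- If `Q` is infinite and acts on `N` with finite stabilizers on `N ∖ {e}`, then the one-sided
quasinormalizer of `Q` in `N ⋊[σ] Q` equals `Q`. -/
theorem stmt16 {N Q : Type*} [Group N] [Group Q] [Infinite Q] (σ : Q →* MulAut N)
    (hstab : ∀ n : N, n ≠ 1 → {r : Q | σ r n = n}.Finite)
    (g : N ⋊[σ] Q) (F : Finset (N ⋊[σ] Q))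
    (hF : {x : N ⋊[σ] Q | ∃ q : Q, x = SemidirectProduct.inr q * g} ⊆
      (F : Set (N ⋊[σ] Q)) * Set.range (fun q : Q => (SemidirectProduct.inr q : N ⋊[σ] Q))) :
    g ∈ Set.range (fun q : Q => (SemidirectProduct.inr q : N ⋊[σ] Q)) := by
  rw [SemidirectProduct.mem_range_inr_iff]
  by_contra hg
  refine SemidirectProduct.infinite_range_apply σ g.left (hstab _ hg)
    ((F.finite_toSet.image SemidirectProduct.left).subset ?_)
  rintro _ ⟨q, rfl⟩
  show σ q g.left ∈ _
  rw [← SemidirectProduct.left_inr_mul]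
  exact SemidirectProduct.left_mem_image_of_mem_mul_range_inr (hF ⟨q, rfl⟩)
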